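/- arXiv:1011.5194 — 4 statements merged into one kernel-verified Lean document; each statement's English description precedes it below -/
import Mathlib

section
/- Let q be a mean-zero stationary process with E|q(0)|⁴ < ∞ that is ρ-mixing with decreasing mixing coefficient ρ. Then for any four points x₁,x₂,x₃,x₄ ∈ ℝ, |E[q(x₁)q(x₂)q(x₃)q(x₄)]| ≤ E|q(0)|⁴ · Σ_{p∈𝒫} ρ^{1/2}(|x_{p(1)}-x_{p(2)}|) ρ^{1/2}(|x_{p(3)}-x_{p(4)}|), where 𝒫 is the set of all 15 ways to choose two (unordered) pairs from {1,2,3,4}. -/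
open MeasureTheory ProbabilityTheory

/-!
Split the four points into two pairs `{a, b}`, `{c, d}` one of which is the closest of the six
pairs of points, and write `E[q_a q_b q_c q_d] = Cov(q_a q_b, q_c q_d) + E[q_a q_b] E[q_c q_d]`.
Since `Var(q_a q_b) ≤ E[(q_a q_b)²] ≤ E q(0)⁴`, ρ-mixing bounds the covariance by `ρ(r) E q(0)⁴`,
`r` being the distance between the two pairs; it also bounds `|E[q_a q_b]|` by
`ρ(|a - b|) E q(0)²`, and `(E q(0)²)² ≤ E q(0)⁴`. If `{a, b}` is the closest pair then
`|a - b| ≤ r`, so `ρ(r) ≤ ρ(r)^{1/2} ρ(|a - b|)^{1/2}` as `ρ` decreases, and `ρ ≤ 1` gives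
`ρ(|a - b|) ρ(|c - d|) ≤ ρ(|a - b|)^{1/2} ρ(|c - d|)^{1/2}`: both are terms of the sum.
-/

/-- `√ρ(|u-v|) · √ρ(|w-z|)`, the term associated to the choice of pairs
`{u,v}` and `{w,z}` among the four points. -/
noncomputable def pairTerm (ρ : ℝ → ℝ) (u v w z : ℝ) : ℝ :=
  Real.sqrt (ρ |u - v|) * Real.sqrt (ρ |w - z|)

noncomputable def pairTermSum (ρ : ℝ → ℝ) (x₁ x₂ x₃ x₄ : ℝ) : ℝ :=
  pairTerm ρ x₁ x₂ x₁ x₃ + pairTerm ρ x₁ x₂ x₁ x₄ + pairTerm ρ x₁ x₂ x₂ x₃ +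
    pairTerm ρ x₁ x₂ x₂ x₄ + pairTerm ρ x₁ x₂ x₃ x₄ + pairTerm ρ x₁ x₃ x₁ x₄ +
    pairTerm ρ x₁ x₃ x₂ x₃ + pairTerm ρ x₁ x₃ x₂ x₄ + pairTerm ρ x₁ x₃ x₃ x₄ +
    pairTerm ρ x₁ x₄ x₂ x₃ + pairTerm ρ x₁ x₄ x₂ x₄ + pairTerm ρ x₁ x₄ x₃ x₄ +
    pairTerm ρ x₂ x₃ x₂ x₄ + pairTerm ρ x₂ x₃ x₃ x₄ + pairTerm ρ x₂ x₄ x₃ x₄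

def pairingBound (ρ : ℝ → ℝ) (a b c d : ℝ) : ℝ :=
  ρ (min (min |a - c| |a - d|) (min |b - c| |b - d|)) + ρ |a - b| * ρ |c - d|

theorem apply_min_le_add {α β : Type*} [LinearOrder α] [AddCommMonoid β] [PartialOrder β]
    [IsOrderedAddMonoid β] {f : α → β} (hf : ∀ x, 0 ≤ f x) (a b : α) :
    f (min a b) ≤ f a + f b := by
  rcases min_choice a b with h | h <;> rw [h]
  · exact le_add_of_nonneg_right (hf b)
  · exact le_add_of_nonneg_left (hf a)

theorem min_le_min_cross_for_some_pairing {α : Type*} [LinearOrder α]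
    (d₁₂ d₁₃ d₁₄ d₂₃ d₂₄ d₃₄ : α) :
    min d₁₂ d₃₄ ≤ min (min d₁₃ d₁₄) (min d₂₃ d₂₄) ∨
      min d₁₃ d₂₄ ≤ min (min d₁₂ d₁₄) (min d₂₃ d₃₄) ∨
      min d₁₄ d₂₃ ≤ min (min d₁₂ d₁₃) (min d₂₄ d₃₄) := by
  -- the pairing containing the shortest of the six distances works
  rcases le_total (min d₁₂ d₃₄) (min d₁₃ d₂₄) with h₁ | h₁ <;>
  rcases le_total (min d₁₂ d₃₄) (min d₁₄ d₂₃) with h₂ | h₂ <;>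
  rcases le_total (min d₁₃ d₂₄) (min d₁₄ d₂₃) with h₃ | h₃ <;>
  simp only [le_min_iff, min_le_iff] at * <;> grind

section Weights

variable {ρ : ℝ → ℝ}

theorem rho_le_sqrt_mul_sqrt (hρ0 : ∀ r, 0 ≤ ρ r) (hρdec : AntitoneOn ρ (Set.Ici 0))
    {s t : ℝ} (ht : 0 ≤ t) (hts : t ≤ s) : ρ s ≤ √(ρ s) * √(ρ t) := by
  calc ρ s = √(ρ s) * √(ρ s) := (Real.mul_self_sqrt (hρ0 s)).symm
    _ ≤ √(ρ s) * √(ρ t) := by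
      gcongr
      exact hρdec ht (ht.trans hts) hts

theorem rho_min_add_rho_mul_le (hρ0 : ∀ r, 0 ≤ ρ r) (hρ1 : ∀ r, ρ r ≤ 1)
    (hρdec : AntitoneOn ρ (Set.Ici 0)) {u v c₁ c₂ c₃ c₄ : ℝ} (hu : 0 ≤ u) (hv : 0 ≤ v)
    (h : min u v ≤ min (min c₁ c₂) (min c₃ c₄)) :
    ρ (min (min c₁ c₂) (min c₃ c₄)) + ρ u * ρ v ≤
      √(ρ u) * √(ρ v) + (√(ρ u) + √(ρ v)) * (√(ρ c₁) + √(ρ c₂) + √(ρ c₃) + √(ρ c₄)) := by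
  have hw : ∀ t, 0 ≤ √(ρ t) := fun t => Real.sqrt_nonneg _
  have hcross : √(ρ (min (min c₁ c₂) (min c₃ c₄))) ≤
      √(ρ c₁) + √(ρ c₂) + √(ρ c₃) + √(ρ c₄) := by
    calc _ ≤ √(ρ (min c₁ c₂)) + √(ρ (min c₃ c₄)) := apply_min_le_add hw _ _
      _ ≤ √(ρ c₁) + √(ρ c₂) + (√(ρ c₃) + √(ρ c₄)) := by
        gcongr <;> exact apply_min_le_add hw _ _
      _ = _ := by ring
  have hmin : ρ (min (min c₁ c₂) (min c₃ c₄)) ≤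
      (√(ρ u) + √(ρ v)) * (√(ρ c₁) + √(ρ c₂) + √(ρ c₃) + √(ρ c₄)) := by
    calc _ ≤ √(ρ (min (min c₁ c₂) (min c₃ c₄))) * √(ρ (min u v)) :=
          rho_le_sqrt_mul_sqrt hρ0 hρdec (le_min hu hv) h
      _ ≤ (√(ρ c₁) + √(ρ c₂) + √(ρ c₃) + √(ρ c₄)) * (√(ρ u) + √(ρ v)) := by
        gcongr
        exact apply_min_le_add hw u v
      _ = _ := mul_comm _ _
  have hprod : ρ u * ρ v ≤ √(ρ u) * √(ρ v) :=
    mul_le_mul (Real.le_sqrt_self_iff.2 (hρ1 u)) (Real.le_sqrt_self_iff.2 (hρ1 v))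
      (hρ0 v) (hw u)
  linarith

theorem pairingBound_le_pairTermSum_for_some_pairing (hρ0 : ∀ r, 0 ≤ ρ r)
    (hρ1 : ∀ r, ρ r ≤ 1) (hρdec : AntitoneOn ρ (Set.Ici 0)) (x₁ x₂ x₃ x₄ : ℝ) :
    pairingBound ρ x₁ x₂ x₃ x₄ ≤ pairTermSum ρ x₁ x₂ x₃ x₄ ∨
      pairingBound ρ x₁ x₃ x₂ x₄ ≤ pairTermSum ρ x₁ x₂ x₃ x₄ ∨
      pairingBound ρ x₁ x₄ x₂ x₃ ≤ pairTermSum ρ x₁ x₂ x₃ x₄ := by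
  refine (min_le_min_cross_for_some_pairing
    |x₁ - x₂| |x₁ - x₃| |x₁ - x₄| |x₂ - x₃| |x₂ - x₄| |x₃ - x₄|).imp ?_ (Or.imp ?_ ?_)
  all_goals
    intro h
    simp only [pairingBound, abs_sub_comm x₃ x₂, abs_sub_comm x₄ x₂, abs_sub_comm x₄ x₃]
    refine (rho_min_add_rho_mul_le hρ0 hρ1 hρdec (abs_nonneg _) (abs_nonneg _) h).trans ?_
    -- the terms of `pairTermSum` left over are products of two square roots
    rw [← sub_nonneg]
    unfold pairTermSum pairTerm
    ring_nf
    positivity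

end Weights

instance ENNReal.holderTriple_four_four_two : ENNReal.HolderTriple 4 4 2 where
  inv_add_inv_eq_inv := by
    rw [← two_mul, show (4 : ENNReal) = 2 * 2 by norm_num, ENNReal.mul_inv (by simp) (by simp),
      ← mul_assoc, ENNReal.mul_inv_cancel (by simp) (by simp), one_mul]

theorem ProbabilityTheory.IdentDistrib.integral_pow_eq {Ω Ω' : Type*} [MeasurableSpace Ω]
    [MeasurableSpace Ω'] {μ : Measure Ω} {ν : Measure Ω'} {f : Ω → ℝ} {g : Ω' → ℝ}
    (h : IdentDistrib f g μ ν) (n : ℕ) :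
    ∫ ω, f ω ^ n ∂μ = ∫ ω, g ω ^ n ∂ν :=
  (h.comp (measurable_id.pow_const n)).integral_eq

section Moments

variable {Ω : Type*} [MeasurableSpace Ω] {μ : Measure Ω} {f g : Ω → ℝ}

theorem integral_mul_sq_le (hf : MemLp f 4 μ) (hg : MemLp g 4 μ) :
    ∫ ω, (f ω * g ω) ^ 2 ∂μ ≤ (∫ ω, f ω ^ 4 ∂μ + ∫ ω, g ω ^ 4 ∂μ) / 2 := by
  have hf4 : Integrable (fun ω => f ω ^ 4) μ := by
    simpa [Even.pow_abs ⟨2, rfl⟩] using hf.integrable_norm_pow (p := 4) (by norm_num)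
  have hg4 : Integrable (fun ω => g ω ^ 4) μ := by
    simpa [Even.pow_abs ⟨2, rfl⟩] using hg.integrable_norm_pow (p := 4) (by norm_num)
  rw [← integral_add hf4 hg4, ← integral_div]
  refine integral_mono_of_nonneg (.of_forall fun ω => sq_nonneg _) ((hf4.add hg4).div_const 2)
    (.of_forall fun ω => ?_)
  nlinarith [sq_nonneg (f ω ^ 2 - g ω ^ 2)]

variable [IsProbabilityMeasure μ]

theorem integral_sq_sub_integral_le (hf : AEStronglyMeasurable f μ) :
    ∫ ω, (f ω - ∫ ω', f ω' ∂μ) ^ 2 ∂μ ≤ ∫ ω, f ω ^ 2 ∂μ := by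
  rw [← variance_eq_integral hf.aemeasurable]
  exact variance_le_expectation_sq hf

theorem sq_integral_sq_le (hf : MemLp f 4 μ) :
    (∫ ω, f ω ^ 2 ∂μ) ^ 2 ≤ ∫ ω, f ω ^ 4 ∂μ := by
  have hsq : MemLp (fun ω => f ω ^ 2) 2 μ := by simpa only [sq] using hf.mul' hf
  have h := variance_eq_sub hsq
  simp only [Pi.pow_apply, ← pow_mul] at h
  linarith [variance_nonneg (fun ω => f ω ^ 2) μ]

end Moments

section Mixing

variable {Ω : Type*}

abbrev sigmaOn [MeasurableSpace Ω] (q : ℝ → Ω → ℝ) (A : Set ℝ) : MeasurableSpace Ω :=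
  ⨆ x ∈ A, MeasurableSpace.comap (fun ω => q x ω) inferInstance

theorem measurable_sigmaOn [MeasurableSpace Ω] {q : ℝ → Ω → ℝ} {A : Set ℝ} {x : ℝ}
    (hx : x ∈ A) : Measurable[sigmaOn q A] (q x) :=
  measurable_iff_comap_le.2
    (le_iSup₂ (f := fun y (_ : y ∈ A) => MeasurableSpace.comap (q y) inferInstance) x hx)

variable [MeasureSpace Ω]

def IsStrictlyStationary (q : ℝ → Ω → ℝ) : Prop :=
  ∀ (s : ℝ) (n : ℕ) (pts : Fin n → ℝ),
    Measure.map (fun ω i => q (pts i + s) ω) ℙ = Measure.map (fun ω i => q (pts i) ω) ℙ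

def IsRhoMixing (q : ℝ → Ω → ℝ) (ρ : ℝ → ℝ) : Prop :=
  ∀ (A B : Set ℝ) (ξ η : Ω → ℝ), Measurable[sigmaOn q A] ξ → Measurable[sigmaOn q B] η →
    MemLp ξ 2 ℙ → MemLp η 2 ℙ →
    ∀ r : ℝ, 0 ≤ r → (∀ x ∈ A, ∀ y ∈ B, r ≤ |x - y|) →
    |(∫ ω, ξ ω * η ω) - (∫ ω, ξ ω) * (∫ ω, η ω)| ≤
      ρ r * Real.sqrt (∫ ω, (ξ ω - ∫ ω', ξ ω') ^ 2) *
        Real.sqrt (∫ ω, (η ω - ∫ ω', η ω') ^ 2)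

variable {q : ℝ → Ω → ℝ} {ρ : ℝ → ℝ}

theorem IsStrictlyStationary.identDistrib (hstat : IsStrictlyStationary q)
    (hmeas : ∀ x, Measurable (q x)) (x y : ℝ) : IdentDistrib (q x) (q y) ℙ ℙ := by
  have hvec : ∀ z : ℝ, Measurable fun ω (_ : Fin 1) => q z ω :=
    fun z => measurable_pi_lambda _ fun _ => hmeas z
  have h : IdentDistrib (fun ω (_ : Fin 1) => q x ω) (fun ω (_ : Fin 1) => q y ω) ℙ ℙ :=
    { aemeasurable_fst := (hvec x).aemeasurable
      aemeasurable_snd := (hvec y).aemeasurable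
      map_eq := by simpa using hstat (x - y) 1 fun _ => y }
  exact h.comp (measurable_pi_apply 0)

theorem IsRhoMixing.abs_integral_mul_le (hmix : IsRhoMixing q ρ) (hmean : ∀ x, ∫ ω, q x ω = 0)
    (hL2 : ∀ x, MemLp (q x) 2 ℙ) (a b : ℝ) :
    |∫ ω, q a ω * q b ω| ≤ ρ |a - b| * √(∫ ω, q a ω ^ 2) * √(∫ ω, q b ω ^ 2) := by
  have h := hmix {a} {b} (q a) (q b) (measurable_sigmaOn rfl) (measurable_sigmaOn rfl)
    (hL2 a) (hL2 b) |a - b| (abs_nonneg _) (by simp)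
  simpa only [hmean, mul_zero, sub_zero] using h

variable [IsProbabilityMeasure (ℙ : Measure Ω)]

theorem IsRhoMixing.abs_integral_mul_mul_sub_le (hmix : IsRhoMixing q ρ) (hρ0 : ∀ r, 0 ≤ ρ r)
    (hid : ∀ x, IdentDistrib (q x) (q 0) ℙ ℙ) (hmom : MemLp (q 0) 4 ℙ) (a b c d : ℝ) {r : ℝ}
    (hr : 0 ≤ r) (hcross : ∀ x ∈ ({a, b} : Set ℝ), ∀ y ∈ ({c, d} : Set ℝ), r ≤ |x - y|) :
    |(∫ ω, q a ω * q b ω * (q c ω * q d ω)) - (∫ ω, q a ω * q b ω) * ∫ ω, q c ω * q d ω| ≤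
      ρ r * ∫ ω, q 0 ω ^ 4 := by
  have hL4 : ∀ x, MemLp (q x) 4 ℙ := fun x => (hid x).memLp_iff.2 hmom
  have hprod : ∀ x y, MemLp (fun ω => q x ω * q y ω) 2 ℙ := fun x y => (hL4 y).mul' (hL4 x)
  have hvar : ∀ x y, ∫ ω, (q x ω * q y ω - ∫ ω', q x ω' * q y ω') ^ 2 ≤ ∫ ω, q 0 ω ^ 4 :=
    fun x y => calc
      _ ≤ ∫ ω, (q x ω * q y ω) ^ 2 := integral_sq_sub_integral_le (hprod x y).1
      _ ≤ ((∫ ω, q x ω ^ 4) + ∫ ω, q y ω ^ 4) / 2 := integral_mul_sq_le (hL4 x) (hL4 y)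
      _ = ∫ ω, q 0 ω ^ 4 := by rw [(hid x).integral_pow_eq, (hid y).integral_pow_eq]; ring
  have hmeas_mul : ∀ {x y : ℝ} {A : Set ℝ}, x ∈ A → y ∈ A →
      Measurable[sigmaOn q A] fun ω => q x ω * q y ω :=
    fun hx hy => (measurable_sigmaOn hx).mul (measurable_sigmaOn hy)
  calc _ ≤ ρ r * √(∫ ω, (q a ω * q b ω - ∫ ω', q a ω' * q b ω') ^ 2) *
        √(∫ ω, (q c ω * q d ω - ∫ ω', q c ω' * q d ω') ^ 2) :=
        hmix {a, b} {c, d} _ _ (hmeas_mul (by simp) (by simp)) (hmeas_mul (by simp) (by simp))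
          (hprod a b) (hprod c d) r hr hcross
    _ ≤ ρ r * √(∫ ω, q 0 ω ^ 4) * √(∫ ω, q 0 ω ^ 4) := by
        have := hρ0 r
        gcongr ρ r * √?_ * √?_
        exacts [hvar a b, hvar c d]
    _ = ρ r * ∫ ω, q 0 ω ^ 4 := by
        rw [mul_assoc, Real.mul_self_sqrt (integral_nonneg fun ω => by positivity)]

theorem IsRhoMixing.abs_integral_mul_mul_le (hmix : IsRhoMixing q ρ) (hρ0 : ∀ r, 0 ≤ ρ r)
    (hmean : ∀ x, ∫ ω, q x ω = 0) (hid : ∀ x, IdentDistrib (q x) (q 0) ℙ ℙ)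
    (hmom : MemLp (q 0) 4 ℙ) (a b c d : ℝ) :
    |∫ ω, q a ω * q b ω * (q c ω * q d ω)| ≤ pairingBound ρ a b c d * ∫ ω, q 0 ω ^ 4 := by
  have hL2 : ∀ x, MemLp (q x) 2 ℙ :=
    fun x => ((hid x).memLp_iff.2 hmom).mono_exponent (by norm_num)
  have hpair : ∀ x y, |∫ ω, q x ω * q y ω| ≤ ρ |x - y| * ∫ ω, q 0 ω ^ 2 := fun x y => by
    have h := hmix.abs_integral_mul_le hmean hL2 x y
    rwa [(hid x).integral_pow_eq, (hid y).integral_pow_eq, mul_assoc,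
      Real.mul_self_sqrt (integral_nonneg fun ω => by positivity)] at h
  have hcov := hmix.abs_integral_mul_mul_sub_le hρ0 hid hmom a b c d
    (r := min (min |a - c| |a - d|) (min |b - c| |b - d|)) (by positivity) (by
      simp only [Set.mem_insert_iff, Set.mem_singleton_iff]
      rintro x (rfl | rfl) y (rfl | rfl) <;> simp)
  calc _ ≤ |(∫ ω, q a ω * q b ω * (q c ω * q d ω)) -
          (∫ ω, q a ω * q b ω) * ∫ ω, q c ω * q d ω| +
          |∫ ω, q a ω * q b ω| * |∫ ω, q c ω * q d ω| := by
        rw [← abs_mul]; exact sub_le_iff_le_add.1 (abs_sub_abs_le_abs_sub _ _)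
    _ ≤ ρ (min (min |a - c| |a - d|) (min |b - c| |b - d|)) * (∫ ω, q 0 ω ^ 4) +
          (ρ |a - b| * ∫ ω, q 0 ω ^ 2) * (ρ |c - d| * ∫ ω, q 0 ω ^ 2) := by
        have := hρ0 |a - b|
        gcongr
        exacts [hpair a b, hpair c d]
    _ ≤ pairingBound ρ a b c d * ∫ ω, q 0 ω ^ 4 := by
        have := mul_le_mul_of_nonneg_left (sq_integral_sq_le hmom)
          (mul_nonneg (hρ0 |a - b|) (hρ0 |c - d|))
        rw [pairingBound]
        linarith

end Mixing

/-- Fourth-moment bound for a mean-zero stationary ρ-mixing process: the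
fourth moment of `q` at four points is bounded by `E|q(0)|⁴` times the sum over
the 15 ways of choosing two unordered pairs from `{1,2,3,4}` of the products
`ρ^{1/2}(|x_{p(1)}-x_{p(2)}|) ρ^{1/2}(|x_{p(3)}-x_{p(4)}|)`. -/
theorem stmt_1
    {Ω : Type*} [MeasureSpace Ω] [IsProbabilityMeasure (ℙ : Measure Ω)]
    (q : ℝ → Ω → ℝ) (ρ : ℝ → ℝ)
    (hmeas : ∀ x, Measurable (q x))
    (hstat : ∀ (s : ℝ) (n : ℕ) (pts : Fin n → ℝ),
      Measure.map (fun ω i => q (pts i + s) ω) ℙ =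
        Measure.map (fun ω i => q (pts i) ω) ℙ)
    (hmean : ∀ x, (∫ ω, q x ω) = 0)
    (hmom : MemLp (q 0) 4 ℙ)
    (hρ0 : ∀ r, 0 ≤ ρ r) (hρ1 : ∀ r, ρ r ≤ 1)
    (hρdec : AntitoneOn ρ (Set.Ici 0))
    (hmix : ∀ (A B : Set ℝ) (ξ η : Ω → ℝ),
      Measurable[⨆ x ∈ A, MeasurableSpace.comap (fun ω => q x ω) inferInstance] ξ →
      Measurable[⨆ x ∈ B, MeasurableSpace.comap (fun ω => q x ω) inferInstance] η →
      MemLp ξ 2 ℙ → MemLp η 2 ℙ →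
      ∀ r : ℝ, 0 ≤ r → (∀ x ∈ A, ∀ y ∈ B, r ≤ |x - y|) →
      |(∫ ω, ξ ω * η ω) - (∫ ω, ξ ω) * (∫ ω, η ω)| ≤
        ρ r * Real.sqrt (∫ ω, (ξ ω - ∫ ω', ξ ω') ^ 2) *
          Real.sqrt (∫ ω, (η ω - ∫ ω', η ω') ^ 2))
    (x₁ x₂ x₃ x₄ : ℝ) :
    |∫ ω, q x₁ ω * q x₂ ω * q x₃ ω * q x₄ ω| ≤
      (∫ ω, |q 0 ω| ^ 4) *
        (pairTerm ρ x₁ x₂ x₁ x₃ + pairTerm ρ x₁ x₂ x₁ x₄ + pairTerm ρ x₁ x₂ x₂ x₃ +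
         pairTerm ρ x₁ x₂ x₂ x₄ + pairTerm ρ x₁ x₂ x₃ x₄ + pairTerm ρ x₁ x₃ x₁ x₄ +
         pairTerm ρ x₁ x₃ x₂ x₃ + pairTerm ρ x₁ x₃ x₂ x₄ + pairTerm ρ x₁ x₃ x₃ x₄ +
         pairTerm ρ x₁ x₄ x₂ x₃ + pairTerm ρ x₁ x₄ x₂ x₄ + pairTerm ρ x₁ x₄ x₃ x₄ +
         pairTerm ρ x₂ x₃ x₂ x₄ + pairTerm ρ x₂ x₃ x₃ x₄ + pairTerm ρ x₂ x₄ x₃ x₄) := by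
  have hid : ∀ x, IdentDistrib (q x) (q 0) ℙ ℙ := fun x =>
    IsStrictlyStationary.identDistrib hstat hmeas x 0
  obtain ⟨a, b, c, d, hperm, hle⟩ : ∃ a b c d : ℝ,
      (∫ ω, q x₁ ω * q x₂ ω * q x₃ ω * q x₄ ω) = (∫ ω, q a ω * q b ω * (q c ω * q d ω)) ∧
        pairingBound ρ a b c d ≤ pairTermSum ρ x₁ x₂ x₃ x₄ := by
    rcases pairingBound_le_pairTermSum_for_some_pairing hρ0 hρ1 hρdec x₁ x₂ x₃ x₄ with h | h | h
    · exact ⟨x₁, x₂, x₃, x₄, by simp only [mul_assoc], h⟩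
    · exact ⟨x₁, x₃, x₂, x₄, by congr 1 with ω; ring, h⟩
    · exact ⟨x₁, x₄, x₂, x₃, by congr 1 with ω; ring, h⟩
  have hQ : ∫ ω, |q 0 ω| ^ 4 = ∫ ω, q 0 ω ^ 4 := by simp only [Even.pow_abs ⟨2, rfl⟩]
  calc _ = |∫ ω, q a ω * q b ω * (q c ω * q d ω)| := by rw [hperm]
    _ ≤ pairingBound ρ a b c d * ∫ ω, q 0 ω ^ 4 :=
      IsRhoMixing.abs_integral_mul_mul_le hmix hρ0 hmean hid hmom a b c d
    _ ≤ _ := by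
      rw [hQ, mul_comm]
      exact mul_le_mul_of_nonneg_left hle (integral_nonneg fun ω => by positivity)
end

section
/- Let R be a function asymptotic to κτ^{−α} at infinity (α ∈ (0,1), κ > 0), bounded on ℝ. Then for any bounded compactly supported F₁ = F·1_{[a,b]} and F₂ = F·1_{[c,d]}, lim_{ε→0} ε^{−α} ∫∫ R((t−s)/ε) F₁(t) F₂(s) dt ds = ∫∫ κ |t−s|^{−α} F₁(t) F₂(s) dt ds. -/
/-!
For even `R` and `ε > 0`, `ε^(-α) R((t - s)/ε) = R(τ) τ^α · |t - s|^(-α)` with `τ = |t - s|/ε`,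
and `τ → ∞` as `ε → 0⁺` off the diagonal, so the integrand converges pointwise to
`κ |t - s|^(-α) F t F s`. Boundedness of `R` on `(0, T]` and the asymptotics on `[T, ∞)` give
`|R τ| τ^α ≤ C` for all `τ > 0`, so the integrands are dominated by `C M² |t - s|^(-α)`, which is
integrable on a bounded rectangle since `α < 1`. Dominated convergence concludes.
-/

open MeasureTheory Filter Set Real
open scoped Topology

lemma intervalIntegrable_abs_rpow {r : ℝ} (hr : -1 < r) (a b : ℝ) :
    IntervalIntegrable (fun x : ℝ => |x| ^ r) volume a b := by
  have hloc : LocallyIntegrable (fun x : ℝ => |x| ^ r) :=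
    locallyIntegrable_of_norm_le_rpow (C := 1) (α := -r) (by simp) (by simp; linarith)
      (Eventually.of_forall fun x => by simp [abs_of_nonneg (rpow_nonneg (abs_nonneg x) r)])
      (continuous_abs.measurable.pow_const r).aestronglyMeasurable
  exact (hloc.integrableOn_isCompact isCompact_uIcc).intervalIntegrable

lemma continuous_intervalIntegral_abs_sub_rpow {r : ℝ} (hr : -1 < r) (c d : ℝ) :
    Continuous fun t : ℝ => ∫ s in c..d, |t - s| ^ r := by
  have hprim := intervalIntegral.continuous_primitive (intervalIntegrable_abs_rpow hr) 0
  have hdiff : (fun t : ℝ => ∫ s in c..d, |t - s| ^ r) =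
      fun t => (∫ u in (0 : ℝ)..t - c, |u| ^ r) - ∫ u in (0 : ℝ)..t - d, |u| ^ r := by
    funext t
    rw [intervalIntegral.integral_comp_sub_left (fun u => |u| ^ r),
      intervalIntegral.integral_interval_sub_left (intervalIntegrable_abs_rpow hr _ _)
        (intervalIntegrable_abs_rpow hr _ _)]
  rw [hdiff]
  exact (hprim.comp (continuous_sub_right c)).sub (hprim.comp (continuous_sub_right d))

lemma integrable_abs_sub_rpow_prod {r : ℝ} (hr : -1 < r) (a b : ℝ) {c d : ℝ} (hcd : c ≤ d) :
    Integrable (fun p : ℝ × ℝ => |p.1 - p.2| ^ r)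
      ((volume.restrict (Ioc a b)).prod (volume.restrict (Ioc c d))) := by
  refine (integrable_prod_iff
    ((measurable_fst.sub measurable_snd).abs.pow_const r).aestronglyMeasurable).2
    ⟨Eventually.of_forall fun t => ?_, ?_⟩
  · change IntegrableOn (fun s => |t - s| ^ r) (Ioc c d) volume
    simpa using ((intervalIntegrable_abs_rpow hr (t - c) (t - d)).comp_sub_left t).1
  · simp only [Real.norm_eq_abs, abs_of_nonneg (rpow_nonneg (abs_nonneg _) _),
      ← intervalIntegral.integral_of_le hcd]
    exact (continuous_intervalIntegral_abs_sub_rpow hr c d).integrableOn_Ioc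

lemma ae_prod_fst_ne_snd {α : Type*} [MeasurableSpace α] [MeasurableEq α] {μ ν : Measure α}
    [SFinite ν] [NullSingletonClass ν] : ∀ᵐ p ∂(μ.prod ν), p.1 ≠ p.2 :=
  (Measure.ae_prod_iff_ae_ae (measurableSet_eq_fun measurable_fst measurable_snd).compl).2
    (Eventually.of_forall fun x => (ν.ae_ne x).mono fun _ => Ne.symm)

lemma intervalIntegral_intervalIntegral_eq_integral_prod {E : Type*} [NormedAddCommGroup E]
    [NormedSpace ℝ E] {f : ℝ → ℝ → E} {a b c d : ℝ}
    (hab : a ≤ b) (hcd : c ≤ d)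
    (hf : Integrable (fun p : ℝ × ℝ => f p.1 p.2)
      ((volume.restrict (Ioc a b)).prod (volume.restrict (Ioc c d)))) :
    ∫ t in a..b, ∫ s in c..d, f t s =
      ∫ p, f p.1 p.2 ∂((volume.restrict (Ioc a b)).prod (volume.restrict (Ioc c d))) := by
  simp only [intervalIntegral.integral_of_le hab, intervalIntegral.integral_of_le hcd]
  exact integral_integral hf

section Kernel

variable {μ ν : Measure ℝ} [SFinite ν] [NullSingletonClass ν] {K g F G : ℝ → ℝ} {M N : ℝ}

lemma ae_abs_kernel_mul_le (hKg : ∀ x ≠ 0, |K x| ≤ g x) (hFM : ∀ t, |F t| ≤ M)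
    (hGN : ∀ s, |G s| ≤ N) :
    ∀ᵐ p ∂(μ.prod ν), ‖K (p.1 - p.2) * F p.1 * G p.2‖ ≤ g (p.1 - p.2) * M * N := by
  filter_upwards [ae_prod_fst_ne_snd] with p hp
  have hK := hKg _ (sub_ne_zero.2 hp)
  have hg0 : 0 ≤ g (p.1 - p.2) := (abs_nonneg _).trans hK
  have hM : 0 ≤ M := (abs_nonneg _).trans (hFM 0)
  rw [Real.norm_eq_abs, abs_mul, abs_mul]
  gcongr
  exacts [hFM _, hGN _]

lemma integrable_kernel_mul (hK : Measurable K) (hKg : ∀ x ≠ 0, |K x| ≤ g x)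
    (hg : Integrable (fun p : ℝ × ℝ => g (p.1 - p.2)) (μ.prod ν))
    (hF : Measurable F) (hFM : ∀ t, |F t| ≤ M) (hG : Measurable G) (hGN : ∀ s, |G s| ≤ N) :
    Integrable (fun p : ℝ × ℝ => K (p.1 - p.2) * F p.1 * G p.2) (μ.prod ν) :=
  ((hg.mul_const M).mul_const N).mono' (by fun_prop) (ae_abs_kernel_mul_le hKg hFM hGN)

theorem tendsto_integral_kernel_mul {ι : Type*} {l : Filter ι} [l.IsCountablyGenerated]
    {K : ι → ℝ → ℝ} {k : ℝ → ℝ} (hK : ∀ i, Measurable (K i))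
    (hKg : ∀ᶠ i in l, ∀ x ≠ 0, |K i x| ≤ g x)
    (hKk : ∀ x ≠ 0, Tendsto (fun i => K i x) l (𝓝 (k x)))
    (hg : Integrable (fun p : ℝ × ℝ => g (p.1 - p.2)) (μ.prod ν))
    (hF : Measurable F) (hFM : ∀ t, |F t| ≤ M) (hG : Measurable G) (hGN : ∀ s, |G s| ≤ N) :
    Tendsto (fun i => ∫ p, K i (p.1 - p.2) * F p.1 * G p.2 ∂(μ.prod ν)) l
      (𝓝 (∫ p, k (p.1 - p.2) * F p.1 * G p.2 ∂(μ.prod ν))) := by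
  refine tendsto_integral_filter_of_dominated_convergence (fun p => g (p.1 - p.2) * M * N)
    (Eventually.of_forall fun i => by fun_prop)
    (hKg.mono fun i hi => ae_abs_kernel_mul_le hi hFM hGN) ((hg.mul_const M).mul_const N) ?_
  filter_upwards [ae_prod_fst_ne_snd] with p hp
  exact ((hKk _ (sub_ne_zero.2 hp)).mul_const _).mul_const _

end Kernel

theorem tendsto_intervalIntegral_kernel_mul {ι : Type*} {l : Filter ι} [l.IsCountablyGenerated]
    [l.NeBot] {K : ι → ℝ → ℝ} {k g F G : ℝ → ℝ} {M N a b c d : ℝ} (hab : a ≤ b) (hcd : c ≤ d)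
    (hK : ∀ i, Measurable (K i)) (hk : Measurable k) (hKg : ∀ᶠ i in l, ∀ x ≠ 0, |K i x| ≤ g x)
    (hKk : ∀ x ≠ 0, Tendsto (fun i => K i x) l (𝓝 (k x)))
    (hg : Integrable (fun p : ℝ × ℝ => g (p.1 - p.2))
      ((volume.restrict (Ioc a b)).prod (volume.restrict (Ioc c d))))
    (hF : Measurable F) (hFM : ∀ t, |F t| ≤ M) (hG : Measurable G) (hGN : ∀ s, |G s| ≤ N) :
    Tendsto (fun i => ∫ t in a..b, ∫ s in c..d, K i (t - s) * F t * G s) l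
      (𝓝 (∫ t in a..b, ∫ s in c..d, k (t - s) * F t * G s)) := by
  have hkg : ∀ x ≠ 0, |k x| ≤ g x := fun x hx =>
    le_of_tendsto (hKk x hx).abs (hKg.mono fun i hi => hi x hx)
  rw [intervalIntegral_intervalIntegral_eq_integral_prod (f := fun t s => k (t - s) * F t * G s)
    hab hcd (integrable_kernel_mul hk hkg hg hF hFM hG hGN)]
  refine (tendsto_integral_kernel_mul hK hKg hKk hg hF hFM hG hGN).congr' ?_
  filter_upwards [hKg] with i hi
  exact (intervalIntegral_intervalIntegral_eq_integral_prod
    (f := fun t s => K i (t - s) * F t * G s) hab hcd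
    (integrable_kernel_mul (hK i) hi hg hF hFM hG hGN)).symm

section Asymptotics

variable {R : ℝ → ℝ} {κ α : ℝ}

lemma exists_abs_mul_rpow_le_of_tendsto {MR : ℝ} (hα : 0 ≤ α) (hRbd : ∀ τ, |R τ| ≤ MR)
    (hR : Tendsto (fun τ => R τ * τ ^ α) atTop (𝓝 κ)) :
    ∃ C, ∀ τ, 0 < τ → |R τ| * τ ^ α ≤ C := by
  obtain ⟨T, hT⟩ := eventually_atTop.1 (hR.abs.eventually (eventually_le_nhds (lt_add_one |κ|)))
  refine ⟨max (|κ| + 1) (MR * max T 0 ^ α), fun τ hτ => ?_⟩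
  rcases le_total T τ with hTτ | hτT
  · refine le_max_of_le_left ?_
    simpa [abs_mul, abs_of_nonneg (rpow_nonneg hτ.le α)] using hT τ hTτ
  · refine le_max_of_le_right ?_
    gcongr
    · exact (abs_nonneg _).trans (hRbd 0)
    · exact hRbd τ
    · exact le_max_of_le_left hτT

lemma rpow_neg_mul_apply_div (hR : Function.Even R) {x ε : ℝ} (hx : x ≠ 0) (hε : 0 < ε) :
    ε ^ (-α) * R (x / ε) = R (|x| / ε) * (|x| / ε) ^ α * |x| ^ (-α) := by
  have hx' : 0 < |x| := abs_pos.2 hx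
  have hRx : R (x / ε) = R (|x| / ε) := by
    rcases abs_choice x with h | h <;> rw [h]
    rw [neg_div, hR]
  rw [hRx, div_rpow hx'.le hε.le, rpow_neg hx'.le, rpow_neg hε.le]
  field_simp

lemma abs_rpow_neg_mul_apply_div_le (hR : Function.Even R) {C : ℝ}
    (hC : ∀ τ, 0 < τ → |R τ| * τ ^ α ≤ C) {x ε : ℝ} (hx : x ≠ 0) (hε : 0 < ε) :
    |ε ^ (-α) * R (x / ε)| ≤ C * |x| ^ (-α) := by
  have hτ : 0 < |x| / ε := div_pos (abs_pos.2 hx) hε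
  rw [rpow_neg_mul_apply_div hR hx hε, abs_mul, abs_mul, abs_of_pos (rpow_pos_of_pos hτ α),
    abs_of_nonneg (rpow_nonneg (abs_nonneg x) _)]
  exact mul_le_mul_of_nonneg_right (hC _ hτ) (rpow_nonneg (abs_nonneg x) _)

lemma tendsto_rpow_neg_mul_apply_div (hR : Function.Even R)
    (hasymp : Tendsto (fun τ => R τ * τ ^ α) atTop (𝓝 κ)) {x : ℝ} (hx : x ≠ 0) :
    Tendsto (fun ε => ε ^ (-α) * R (x / ε)) (𝓝[>] 0) (𝓝 (κ * |x| ^ (-α))) := by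
  have hτ : Tendsto (fun ε : ℝ => |x| / ε) (𝓝[>] 0) atTop := by
    simpa [div_eq_mul_inv] using tendsto_inv_nhdsGT_zero.const_mul_atTop (abs_pos.2 hx)
  refine ((hasymp.comp hτ).mul_const (|x| ^ (-α))).congr' ?_
  filter_upwards [self_mem_nhdsWithin] with ε hε
  exact (rpow_neg_mul_apply_div hR hx hε).symm

end Asymptotics

theorem stmt_4_general
    (R F : ℝ → ℝ) (κ α : ℝ) (hα : α ∈ Set.Ioo (0:ℝ) 1)
    (hRmeas : Measurable R) (hRsymm : ∀ τ, R (-τ) = R τ)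
    (MR : ℝ) (hRbd : ∀ τ, |R τ| ≤ MR)
    (hasymp : Tendsto (fun τ : ℝ => R τ * τ ^ α) atTop (𝓝 κ))
    (hF : Measurable F) (M : ℝ) (hFbd : ∀ t, |F t| ≤ M)
    (a b c d : ℝ) (hab : a ≤ b) (hcd : c ≤ d) :
    Tendsto (fun ε : ℝ =>
        ε ^ (-α) * ∫ t in a..b, ∫ s in c..d, R ((t - s) / ε) * F t * F s)
      (𝓝[>] 0)
      (𝓝 (∫ t in a..b, ∫ s in c..d, κ * |t - s| ^ (-α) * F t * F s)) := by
  obtain ⟨hα0, hα1⟩ := hα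
  obtain ⟨C, hC⟩ := exists_abs_mul_rpow_le_of_tendsto hα0.le hRbd hasymp
  have hlim := tendsto_intervalIntegral_kernel_mul (l := 𝓝[>] 0) hab hcd
    (K := fun ε x => ε ^ (-α) * R (x / ε)) (k := fun x => κ * |x| ^ (-α))
    (g := fun x => C * |x| ^ (-α)) (fun ε => by fun_prop) (by fun_prop)
    (eventually_mem_nhdsWithin.mono fun ε hε x hx =>
      abs_rpow_neg_mul_apply_div_le hRsymm hC hx hε)
    (fun x hx => tendsto_rpow_neg_mul_apply_div hRsymm hasymp hx)
    ((integrable_abs_sub_rpow_prod (by linarith) a b hcd).const_mul C) hF hFbd hF hFbd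
  refine hlim.congr fun ε => ?_
  simp_rw [← intervalIntegral.integral_const_mul, ← mul_assoc]

/-- If `R` is even, bounded, and `R(τ) τ^α → κ` as `τ → ∞` with `α ∈ (0,1)`,
then for bounded measurable `F` and intervals `[a,b]`, `[c,d]`,
`ε^{-α} ∫∫ R((t-s)/ε) F₁(t) F₂(s) dt ds → ∫∫ κ |t-s|^{-α} F₁(t) F₂(s) dt ds`
as `ε → 0⁺`, where `F₁ = F·1_{[a,b]}`, `F₂ = F·1_{[c,d]}`. -/
theorem stmt_4
    (R F : ℝ → ℝ) (κ α : ℝ) (hα : α ∈ Set.Ioo (0:ℝ) 1) (hκ : 0 < κ)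
    (hRmeas : Measurable R) (hRsymm : ∀ τ, R (-τ) = R τ)
    (MR : ℝ) (hRbd : ∀ τ, |R τ| ≤ MR)
    (hasymp : Tendsto (fun τ : ℝ => R τ * τ ^ α) atTop (𝓝 κ))
    (hF : Measurable F) (M : ℝ) (hFbd : ∀ t, |F t| ≤ M)
    (a b c d : ℝ) (hab : a ≤ b) (hcd : c ≤ d) :
    Tendsto (fun ε : ℝ =>
        ε ^ (-α) * ∫ t in a..b, ∫ s in c..d, R ((t - s) / ε) * F t * F s)
      (𝓝[>] 0)
      (𝓝 (∫ t in a..b, ∫ s in c..d, κ * |t - s| ^ (-α) * F t * F s)) :=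
  stmt_4_general R F κ α hα hRmeas hRsymm MR hRbd hasymp hF M hFbd a b c d hab hcd
end

section
/- Let L^h_{11}(x,t) = Σ_{k=1}^N 1_{I_k}(t) g_k(x) c_k where for each k: g_k: [0,1] → ℝ is Lipschitz with constant C₁ and piecewise linear with |g_k| ≤ C₁, and additionally g_k(x) − g_k(y) is constant equal to (y−x)·c'_k with |c'_k| ≤ C₁ whenever x,y both lie outside [x_{k−1}, x_k] on the same side (as realized by g_k(x) = a*D⁻G₀(x,x_k)/h for the explicit Green's function G₀); and |c_k| ≤ C₂. Then ∫₀¹ (L^h_{11}(x,t) − L^h_{11}(y,t))² dt ≤ C |x−y| for a constant C depending only on C₁, C₂ (not on h). -/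
/-!
Write `g_k(x) = a* D⁻G₀(x, x_k) / h`, `δ = y - x ≥ 0` and `D_k = g_k(x) - g_k(y)`. The cells `I_k`
are disjoint of length `h`, so the integral is `h Σ_k c_k² D_k²`. Explicitly
`g_k(x) = -x + clamp_[0,1]((x - x_{k-1}) / h)`, hence `D_k ∈ [δ - 1, δ]`; and `Σ_k g_k(x)`
telescopes to `a* (G₀(x, 1) - G₀(x, 0)) / h = 0`, hence `Σ_k D_k = 0`. Summing
`(D_k - δ + 1)(δ - D_k) ≥ 0` over `k` gives `Σ_k D_k² ≤ N δ (1 - δ)`, so `h Σ_k D_k² ≤ δ`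
without counting the cells between `x` and `y`.
-/

open MeasureTheory Set

section StepFunctions

variable {α ι : Type*}

theorem sq_sum_indicator_of_pairwiseDisjoint {s : Finset ι} {S : ι → Set α}
    (hS : (s : Set ι).PairwiseDisjoint S) (b : ι → ℝ) (t : α) :
    (∑ i ∈ s, (S i).indicator (fun _ => b i) t) ^ 2 =
      ∑ i ∈ s, (S i).indicator (fun _ => b i ^ 2) t := by
  by_cases ht : ∃ j ∈ s, t ∈ S j
  · obtain ⟨j, hj, htj⟩ := ht
    have hout : ∀ i ∈ s, i ≠ j → t ∉ S i := fun i hi hij hti =>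
      disjoint_left.1 (hS hi hj hij) hti htj
    rw [Finset.sum_eq_single_of_mem j hj fun i hi hij => indicator_of_notMem (hout i hi hij) _,
      Finset.sum_eq_single_of_mem j hj fun i hi hij => indicator_of_notMem (hout i hi hij) _,
      indicator_of_mem htj, indicator_of_mem htj]
  · push Not at ht
    rw [Finset.sum_eq_zero fun i hi => indicator_of_notMem (ht i hi) _,
      Finset.sum_eq_zero fun i hi => indicator_of_notMem (ht i hi) _, zero_pow two_ne_zero]

theorem setIntegral_sq_sum_indicator [MeasurableSpace α] {μ : Measure α} {T : Set α}
    {s : Finset ι} {S : ι → Set α} (hS : (s : Set ι).PairwiseDisjoint S)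
    (hST : ∀ i ∈ s, S i ⊆ T) (hmeas : ∀ i ∈ s, MeasurableSet (S i))
    (hfin : ∀ i ∈ s, μ (S i) ≠ ⊤) (b : ι → ℝ) :
    ∫ t in T, (∑ i ∈ s, (S i).indicator (fun _ => b i) t) ^ 2 ∂μ =
      ∑ i ∈ s, μ.real (S i) * b i ^ 2 := by
  simp_rw [sq_sum_indicator_of_pairwiseDisjoint hS]
  rw [integral_finsetSum]
  · refine Finset.sum_congr rfl fun i hi => ?_
    rw [integral_indicator_const _ (hmeas i hi), measureReal_restrict_apply (hmeas i hi),
      inter_eq_left.2 (hST i hi), smul_eq_mul]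
  · exact fun i hi =>
      ((integrable_indicator_iff (hmeas i hi)).2 (integrableOn_const (hfin i hi))).restrict

end StepFunctions

section Mesh

variable {N : ℕ} {h : ℝ}

theorem pairwiseDisjoint_Ioo_mesh (hh : 0 ≤ h) (s : Set ℕ) :
    s.PairwiseDisjoint fun k : ℕ => Ioo (((k : ℝ) - 1) * h) ((k : ℝ) * h) := by
  have hmono : Monotone fun k : ℕ => ((k : ℝ) - 1) * h := fun i j hij => by dsimp only; gcongr
  have := hmono.pairwise_disjoint_on_Ioo_succ
  simp only [Order.succ_eq_add_one, Nat.cast_add, Nat.cast_one, add_sub_cancel_right] at this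
  exact this.set_pairwise s

theorem Ioo_mesh_subset_Ioo_zero_one (hN : 0 < N) (hh : h = 1 / N) {k : ℕ}
    (hk : k ∈ Finset.Icc 1 N) :
    Ioo (((k : ℝ) - 1) * h) ((k : ℝ) * h) ⊆ Ioo 0 1 := by
  obtain ⟨hk1, hkN⟩ := Finset.mem_Icc.1 hk
  have hN' : (0 : ℝ) < N := by exact_mod_cast hN
  refine Ioo_subset_Ioo ?_ ?_
  · rw [hh]
    have : (1 : ℝ) ≤ k := by exact_mod_cast hk1
    have : 0 ≤ (k : ℝ) - 1 := by linarith
    positivity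
  · rw [hh, mul_one_div, div_le_one hN']
    exact_mod_cast hkN

theorem setIntegral_sq_sub_mesh_step (hN : 0 < N) (hh : h = 1 / N) (b b' : ℕ → ℝ) :
    ∫ t in Ioo (0 : ℝ) 1,
      ((∑ k ∈ Finset.Icc 1 N, (Ioo (((k : ℝ) - 1) * h) ((k : ℝ) * h)).indicator (fun _ => b k) t) -
        ∑ k ∈ Finset.Icc 1 N, (Ioo (((k : ℝ) - 1) * h) ((k : ℝ) * h)).indicator
          (fun _ => b' k) t) ^ 2 =
      ∑ k ∈ Finset.Icc 1 N, h * (b k - b' k) ^ 2 := by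
  have h0 : 0 ≤ h := by rw [hh]; positivity
  have hsub : ∀ t : ℝ,
      (∑ k ∈ Finset.Icc 1 N, (Ioo (((k : ℝ) - 1) * h) ((k : ℝ) * h)).indicator (fun _ => b k) t) -
        ∑ k ∈ Finset.Icc 1 N, (Ioo (((k : ℝ) - 1) * h) ((k : ℝ) * h)).indicator
          (fun _ => b' k) t =
      ∑ k ∈ Finset.Icc 1 N, (Ioo (((k : ℝ) - 1) * h) ((k : ℝ) * h)).indicator
          (fun _ => b k - b' k) t := fun t => by
    simp only [← Finset.sum_sub_distrib, indicator_sub]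
  simp_rw [hsub]
  rw [setIntegral_sq_sum_indicator (pairwiseDisjoint_Ioo_mesh h0 _)
    (fun k hk => Ioo_mesh_subset_Ioo_zero_one hN hh hk) (fun _ _ => measurableSet_Ioo)
    (fun _ _ => measure_Ioo_lt_top.ne)]
  refine Finset.sum_congr rfl fun k _ => ?_
  rw [Real.volume_real_Ioo_of_le (by nlinarith)]
  ring

end Mesh

theorem sum_sq_le_card_mul_of_sum_eq_zero {ι : Type*} {s : Finset ι} {f : ι → ℝ} {m M : ℝ}
    (hsum : ∑ i ∈ s, f i = 0) (hf : ∀ i ∈ s, f i ∈ Icc m M) :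
    ∑ i ∈ s, f i ^ 2 ≤ s.card * -(m * M) := by
  calc ∑ i ∈ s, f i ^ 2 ≤ ∑ i ∈ s, ((m + M) * f i - m * M) :=
        Finset.sum_le_sum fun i hi => by
          obtain ⟨hm, hM⟩ := hf i hi
          nlinarith [mul_nonneg (sub_nonneg.2 hm) (sub_nonneg.2 hM)]
    _ = s.card * -(m * M) := by
        rw [Finset.sum_sub_distrib, ← Finset.mul_sum, hsum, Finset.sum_const, nsmul_eq_mul]
        ring

theorem sum_Icc_sub_pred (f : ℝ → ℝ) (N : ℕ) :
    ∑ k ∈ Finset.Icc 1 N, (f k - f ((k : ℝ) - 1)) = f N - f 0 := by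
  induction N with
  | zero => simp
  | succ n ih =>
    rw [Finset.sum_Icc_succ_top (by omega), ih]
    push_cast
    rw [add_sub_cancel_right]
    ring

section GreenFunction

variable {a h : ℝ} {G : ℝ → ℝ → ℝ}

/-- `a D⁻G(x, x_k) / h` for the mesh `x_k = k h`. -/
noncomputable def meshSlope (a h : ℝ) (G : ℝ → ℝ → ℝ) (x : ℝ) (k : ℕ) : ℝ :=
  a * (G x ((k : ℝ) * h) - G x (((k : ℝ) - 1) * h)) / h

/-- The Green's function of `-a u''` on `(0, 1)` with zero boundary values. -/
def IsDirichletGreen (a : ℝ) (G : ℝ → ℝ → ℝ) : Prop :=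
  ∀ x y, G x y = if x ≤ y then a⁻¹ * x * (1 - y) else a⁻¹ * (1 - x) * y

theorem meshSlope_eq (hG : IsDirichletGreen a G) (ha : a ≠ 0) (hh : 0 < h) (x : ℝ) (k : ℕ) :
    meshSlope a h G x k = -x + projIcc 0 1 zero_le_one ((x - ((k : ℝ) - 1) * h) / h) := by
  set s := ((k : ℝ) - 1) * h
  have hks : (k : ℝ) * h = s + h := by ring
  rw [meshSlope, hks, hG, hG]
  rcases le_or_gt x s with hxs | hsx
  · rw [if_pos (by linarith), if_pos hxs,
      projIcc_of_le_left _ (div_nonpos_of_nonpos_of_nonneg (by linarith) hh.le)]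
    field_simp
    ring
  rcases le_or_gt x (s + h) with hxh | hhx
  · rw [if_pos hxh, if_neg hsx.not_ge, projIcc_of_mem _ ⟨by positivity, by
      rw [div_le_one hh]; linarith⟩]
    field_simp
    ring
  · rw [if_neg hhx.not_ge, if_neg hsx.not_ge, projIcc_of_right_le _ (by
      rw [le_div_iff₀ hh]; linarith)]
    field_simp
    ring

theorem sum_meshSlope_eq_zero (hG : IsDirichletGreen a G) {N : ℕ} (hN : 0 < N)
    (hh : h = 1 / N) {x : ℝ} (hx : x ∈ Icc (0 : ℝ) 1) :
    ∑ k ∈ Finset.Icc 1 N, meshSlope a h G x k = 0 := by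
  have hG0 : G x 0 = 0 := by
    rw [hG]
    split_ifs with hx0
    · simp [le_antisymm hx0 hx.1]
    · ring
  have hG1 : G x 1 = 0 := by
    rw [hG, if_pos hx.2]
    ring
  have hNh : (N : ℝ) * h = 1 := by
    rw [hh]
    field_simp
  have htel := sum_Icc_sub_pred (fun u => G x (u * h)) N
  simp only [zero_mul, hNh, hG0, hG1, sub_zero] at htel
  simp only [meshSlope, ← Finset.sum_div, ← Finset.mul_sum, htel, mul_zero, zero_div]

theorem meshSlope_sub_mem_Icc (hG : IsDirichletGreen a G) (ha : a ≠ 0) (hh : 0 < h)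
    {x y : ℝ} (hxy : x ≤ y) (k : ℕ) :
    meshSlope a h G x k - meshSlope a h G y k ∈ Icc (y - x - 1) (y - x) := by
  rw [meshSlope_eq hG ha hh, meshSlope_eq hG ha hh]
  set px := projIcc (0 : ℝ) 1 zero_le_one ((x - ((k : ℝ) - 1) * h) / h)
  set py := projIcc (0 : ℝ) 1 zero_le_one ((y - ((k : ℝ) - 1) * h) / h)
  have hle : (px : ℝ) ≤ py := monotone_projIcc zero_le_one
    (show (x - ((k : ℝ) - 1) * h) / h ≤ (y - ((k : ℝ) - 1) * h) / h by gcongr)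
  have := px.2.1
  have := py.2.2
  constructor <;> linarith

theorem sum_mul_sq_meshSlope_sub_le (hG : IsDirichletGreen a G) (ha : a ≠ 0) {N : ℕ}
    (hN : 0 < N) (hh : h = 1 / N) {x y : ℝ} (hx : x ∈ Icc (0 : ℝ) 1) (hy : y ∈ Icc (0 : ℝ) 1) :
    ∑ k ∈ Finset.Icc 1 N, h * (meshSlope a h G x k - meshSlope a h G y k) ^ 2 ≤ |x - y| := by
  wlog hxy : x ≤ y generalizing x y
  · simpa only [← neg_sub (meshSlope a h G x _), neg_sq, abs_sub_comm]
      using this hy hx (le_of_not_ge hxy)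
  have hh0 : 0 < h := by rw [hh]; positivity
  have hsum : ∑ k ∈ Finset.Icc 1 N, (meshSlope a h G x k - meshSlope a h G y k) = 0 := by
    rw [Finset.sum_sub_distrib, sum_meshSlope_eq_zero hG hN hh hx,
      sum_meshSlope_eq_zero hG hN hh hy, sub_zero]
  have hsq := sum_sq_le_card_mul_of_sum_eq_zero hsum
    fun k _ => meshSlope_sub_mem_Icc hG ha hh0 hxy k
  rw [Nat.card_Icc, Nat.add_sub_cancel] at hsq
  calc ∑ k ∈ Finset.Icc 1 N, h * (meshSlope a h G x k - meshSlope a h G y k) ^ 2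
      ≤ h * (N * -((y - x - 1) * (y - x))) := by
        rw [← Finset.mul_sum]
        gcongr
    _ = (y - x) * (1 - (y - x)) := by
        rw [hh]
        field_simp
        ring
    _ ≤ |x - y| := by
        rw [abs_sub_comm, abs_of_nonneg (sub_nonneg.2 hxy)]
        nlinarith [hx.1, hy.2]

end GreenFunction

theorem stmt_17_general (C₂ : ℝ) :
    ∃ C : ℝ, 0 < C ∧
      ∀ (astar : ℝ), 0 < astar → ∀ (N : ℕ), 0 < N → ∀ h : ℝ, h = 1 / N →
      ∀ (G : ℝ → ℝ → ℝ),
        (∀ x y, G x y =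
          if x ≤ y then astar⁻¹ * x * (1 - y) else astar⁻¹ * (1 - x) * y) →
      ∀ (c : ℕ → ℝ), (∀ k, |c k| ≤ C₂) →
      ∀ x ∈ Set.Icc (0:ℝ) 1, ∀ y ∈ Set.Icc (0:ℝ) 1,
      (∫ t in Set.Ioo (0:ℝ) 1,
        ((∑ k ∈ Finset.Icc 1 N, (Set.Ioo (((k:ℝ) - 1) * h) ((k:ℝ) * h)).indicator
            (fun _ => astar * (G x ((k:ℝ) * h) - G x (((k:ℝ) - 1) * h)) / h * c k) t) -
         (∑ k ∈ Finset.Icc 1 N, (Set.Ioo (((k:ℝ) - 1) * h) ((k:ℝ) * h)).indicator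
            (fun _ => astar * (G y ((k:ℝ) * h) - G y (((k:ℝ) - 1) * h)) / h * c k) t)) ^ 2)
        ≤ C * |x - y| := by
  refine ⟨C₂ ^ 2 + 1, by positivity, fun a ha N hN h hh G hG c hc x hx y hy => ?_⟩
  have hh0 : 0 ≤ h := by rw [hh]; positivity
  have hc2 : ∀ k, c k ^ 2 ≤ C₂ ^ 2 := fun k => sq_le_sq' (abs_le.1 (hc k)).1 (abs_le.1 (hc k)).2
  calc _ = ∑ k ∈ Finset.Icc 1 N,
          h * (meshSlope a h G x k * c k - meshSlope a h G y k * c k) ^ 2 :=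
        setIntegral_sq_sub_mesh_step hN hh _ _
    _ ≤ C₂ ^ 2 * ∑ k ∈ Finset.Icc 1 N, h * (meshSlope a h G x k - meshSlope a h G y k) ^ 2 := by
        rw [Finset.mul_sum]
        refine Finset.sum_le_sum fun k _ => ?_
        rw [← sub_mul, mul_pow, ← mul_assoc, mul_comm (C₂ ^ 2)]
        exact mul_le_mul_of_nonneg_left (hc2 k) (by positivity)
    _ ≤ C₂ ^ 2 * |x - y| := by
        gcongr
        exact sum_mul_sq_meshSlope_sub_le hG ha.ne' hN hh hx hy
    _ ≤ (C₂ ^ 2 + 1) * |x - y| := by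
        gcongr
        linarith

/-- L²-in-`t` modulus of continuity for the kernel
`L^h_{11}(x,t) = Σ_k 1_{I_k}(t) (a* D⁻G₀(x,x_k)/h) c_k`, built from the explicit
Green's function `G₀` and coefficients `|c_k| ≤ C₂`:
`∫₀¹ (L^h_{11}(x,t) - L^h_{11}(y,t))² dt ≤ C |x-y|`, with `C` depending only
on `C₂` (not on the mesh size `h`). -/
theorem stmt_17 (C₂ : ℝ) (hC₂ : 0 ≤ C₂) :
    ∃ C : ℝ, 0 < C ∧
      ∀ (astar : ℝ), 0 < astar → ∀ (N : ℕ), 0 < N → ∀ h : ℝ, h = 1 / N →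
      ∀ (G : ℝ → ℝ → ℝ),
        (∀ x y, G x y =
          if x ≤ y then astar⁻¹ * x * (1 - y) else astar⁻¹ * (1 - x) * y) →
      ∀ (c : ℕ → ℝ), (∀ k, |c k| ≤ C₂) →
      ∀ x ∈ Set.Icc (0:ℝ) 1, ∀ y ∈ Set.Icc (0:ℝ) 1,
      (∫ t in Set.Ioo (0:ℝ) 1,
        ((∑ k ∈ Finset.Icc 1 N, (Set.Ioo (((k:ℝ) - 1) * h) ((k:ℝ) * h)).indicator
            (fun _ => astar * (G x ((k:ℝ) * h) - G x (((k:ℝ) - 1) * h)) / h * c k) t) -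
         (∑ k ∈ Finset.Icc 1 N, (Set.Ioo (((k:ℝ) - 1) * h) ((k:ℝ) * h)).indicator
            (fun _ => astar * (G y ((k:ℝ) * h) - G y (((k:ℝ) - 1) * h)) / h * c k) t)) ^ 2)
        ≤ C * |x - y| :=
  stmt_17_general C₂
end

section
/- Let L^h₂(x,t) = c_{j(x)}(1_{[x_{j(x)−1}, x]}(t) − ((x − x_{j(x)−1})/h) 1_{I_{j(x)}}(t)) where j(x) is the index with x ∈ (x_{j(x)−1}, x_{j(x)}] and |c_j| ≤ C₀ uniformly. Then for x, y in the same mesh interval I_j, ∫₀¹ (L^h₂(x,t) − L^h₂(y,t))² dt = c_j² |x−y| (1 − |x−y|/h); and for arbitrary x, y ∈ [0,1], ∫₀¹ (L^h₂(x,t) − L^h₂(y,t))² dt ≤ C |x−y| with C depending only on C₀. -/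
/-!
On a cell `[a, b]` the kernel is `c (1_{[a,x]} - (x - a)/(b - a) 1_{(a,b]})`. For `a ≤ y ≤ x ≤ b`
the difference of two kernels is `c (1_{(y,x]} - (x - y)/(b - a) 1_{(a,b]})`, whose square
integrates to `c² (x - y)(1 - (x - y)/(b - a))`. Taking `y = a`, where the kernel vanishes a.e.,
gives `∫ L(x,·)² = c² (x - a)(b - x)/(b - a) ≤ C₀² min (x - a) (b - x)`. If `y < x` lie in
different cells, a node separates them, and `(f - g)² ≤ 2 f² + 2 g²` bounds the integral by
`4 C₀² |x - y|`.
-/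

open MeasureTheory Set

section IndicatorSquare

variable {α : Type*}

lemma sq_mul_indicator_sub_indicator {s s' : Set α} (hss' : s ⊆ s') (c r : ℝ) (t : α) :
    (c * (s.indicator (fun _ => (1 : ℝ)) t - r * s'.indicator (fun _ => (1 : ℝ)) t)) ^ 2 =
      c ^ 2 * (1 - 2 * r) * s.indicator (fun _ => (1 : ℝ)) t +
        c ^ 2 * r ^ 2 * s'.indicator (fun _ => (1 : ℝ)) t := by
  by_cases hs : t ∈ s
  · simp only [indicator_of_mem hs, indicator_of_mem (hss' hs)]; ring
  · by_cases hs' : t ∈ s'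
    · simp only [indicator_of_notMem hs, indicator_of_mem hs']; ring
    · simp only [indicator_of_notMem hs, indicator_of_notMem hs']; ring

lemma integral_sq_mul_indicator_sub_indicator [MeasurableSpace α] {μ : Measure α}
    {s s' : Set α} (hs : MeasurableSet s) (hs' : MeasurableSet s') (hss' : s ⊆ s')
    (hμs' : μ s' ≠ ⊤) (c r : ℝ) :
    ∫ t, (c * (s.indicator (fun _ => (1 : ℝ)) t - r * s'.indicator (fun _ => (1 : ℝ)) t)) ^ 2 ∂μ =
      c ^ 2 * ((1 - 2 * r) * μ.real s + r ^ 2 * μ.real s') := by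
  have hμs : μ s ≠ ⊤ := ne_top_of_le_ne_top hμs' (measure_mono hss')
  simp_rw [sq_mul_indicator_sub_indicator hss']
  rw [integral_add ((integrable_indicator_iff hs).2 (integrableOn_const hμs) |>.const_mul _)
      ((integrable_indicator_iff hs').2 (integrableOn_const hμs') |>.const_mul _),
    integral_const_mul, integral_const_mul, integral_indicator_const _ hs,
    integral_indicator_const _ hs']
  simp only [smul_eq_mul, mul_one]
  ring

lemma integral_sub_sq_le_add [MeasurableSpace α] {μ : Measure α} {f g : α → ℝ}
    (hf : MemLp f 2 μ) (hg : MemLp g 2 μ) :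
    ∫ t, (f t - g t) ^ 2 ∂μ ≤ 2 * ∫ t, f t ^ 2 ∂μ + 2 * ∫ t, g t ^ 2 ∂μ := by
  rw [← integral_const_mul, ← integral_const_mul,
    ← integral_add (hf.integrable_sq.const_mul 2) (hg.integrable_sq.const_mul 2)]
  refine integral_mono (hf.sub hg).integrable_sq
    ((hf.integrable_sq.const_mul 2).add (hg.integrable_sq.const_mul 2)) fun t => ?_
  nlinarith [sq_nonneg (f t + g t)]

end IndicatorSquare

noncomputable def cellKernel (c a b x t : ℝ) : ℝ :=
  c * ((Icc a x).indicator (fun _ => (1 : ℝ)) t -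
    (x - a) / (b - a) * (Ioc a b).indicator (fun _ => (1 : ℝ)) t)

namespace cellKernel

variable {c a b x y : ℝ}

lemma memLp (c a b x : ℝ) : MemLp (cellKernel c a b x) 2 volume := by
  have hIcc := memLp_indicator_const 2 measurableSet_Icc (1 : ℝ)
    (Or.inr (measure_Icc_lt_top (μ := volume) (a := a) (b := x)).ne)
  have hIoc := memLp_indicator_const 2 measurableSet_Ioc (1 : ℝ)
    (Or.inr (measure_Ioc_lt_top (μ := volume) (a := a) (b := b)).ne)
  exact (hIcc.sub (hIoc.const_mul ((x - a) / (b - a)))).const_mul c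

lemma eq_zero_of_notMem {t : ℝ} (hxb : x ≤ b) (ht : t ∉ Icc a b) : cellKernel c a b x t = 0 := by
  have hx : t ∉ Icc a x := fun h => ht (Icc_subset_Icc_right hxb h)
  have hb : t ∉ Ioc a b := fun h => ht (Ioc_subset_Icc_self h)
  simp [cellKernel, indicator_of_notMem hx, indicator_of_notMem hb]

lemma setIntegral_sub_sq_eq_integral {u v : ℝ} (hua : u ≤ a) (hbv : b ≤ v)
    (hxb : x ≤ b) (hyb : y ≤ b) :
    ∫ t in Ioo u v, (cellKernel c a b x t - cellKernel c a b y t) ^ 2 =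
      ∫ t, (cellKernel c a b x t - cellKernel c a b y t) ^ 2 := by
  rw [← integral_Icc_eq_integral_Ioo]
  refine setIntegral_eq_integral_of_forall_compl_eq_zero fun t ht => ?_
  have hab : t ∉ Icc a b := fun h => ht (Icc_subset_Icc hua hbv h)
  rw [eq_zero_of_notMem hxb hab, eq_zero_of_notMem hyb hab, sub_zero,
    zero_pow two_ne_zero]

lemma left_eq_zero {t : ℝ} (ht : t ≠ a) : cellKernel c a b a t = 0 := by
  simp [cellKernel, ht]

lemma sub_eq (hay : a ≤ y) (hyx : y ≤ x) (t : ℝ) :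
    cellKernel c a b x t - cellKernel c a b y t =
      c * ((Ioc y x).indicator (fun _ => (1 : ℝ)) t -
        (x - y) / (b - a) * (Ioc a b).indicator (fun _ => (1 : ℝ)) t) := by
  have hdiff : Icc a x \ Icc a y = Ioc y x := by
    ext s
    simp only [mem_sdiff, mem_Icc, mem_Ioc, not_and, not_le]
    constructor
    · rintro ⟨⟨has, hsx⟩, hys⟩; exact ⟨hys has, hsx⟩
    · rintro ⟨hys, hsx⟩; exact ⟨⟨hay.trans hys.le, hsx⟩, fun _ => hys⟩
  have hind := congrFun
    (indicator_sdiff (Icc_subset_Icc_right hyx : Icc a y ⊆ Icc a x) fun _ => (1 : ℝ)) t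
  rw [hdiff, Pi.sub_apply] at hind
  rw [cellKernel, cellKernel, hind]
  ring

lemma integral_sub_sq_of_le (hab : a < b) (hay : a ≤ y) (hyx : y ≤ x) (hxb : x ≤ b) :
    ∫ t, (cellKernel c a b x t - cellKernel c a b y t) ^ 2 =
      c ^ 2 * (x - y) * (1 - (x - y) / (b - a)) := by
  simp_rw [sub_eq hay hyx]
  rw [integral_sq_mul_indicator_sub_indicator measurableSet_Ioc measurableSet_Ioc
      (Ioc_subset_Ioc hay hxb) measure_Ioc_lt_top.ne, Real.volume_real_Ioc_of_le hyx,
    Real.volume_real_Ioc_of_le hab.le]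
  field_simp [(sub_pos.2 hab).ne']
  ring

lemma integral_sub_sq (hab : a < b) (hx : x ∈ Icc a b) (hy : y ∈ Icc a b) :
    ∫ t, (cellKernel c a b x t - cellKernel c a b y t) ^ 2 =
      c ^ 2 * |x - y| * (1 - |x - y| / (b - a)) := by
  wlog hyx : y ≤ x generalizing x y
  · rw [abs_sub_comm, ← this hy hx (le_of_not_ge hyx)]
    congr 1 with t
    ring
  rw [abs_of_nonneg (sub_nonneg.2 hyx)]
  exact integral_sub_sq_of_le hab hy.1 hyx hx.2

lemma integral_sq (hab : a < b) (hx : x ∈ Icc a b) :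
    ∫ t, cellKernel c a b x t ^ 2 = c ^ 2 * (x - a) * (b - x) / (b - a) := by
  -- `cellKernel c a b a` is supported on `{a}`.
  have hnode : (fun t => cellKernel c a b x t ^ 2) =ᵐ[volume]
      fun t => (cellKernel c a b x t - cellKernel c a b a t) ^ 2 := by
    filter_upwards [Measure.ae_ne volume a] with t ht
    rw [left_eq_zero ht, sub_zero]
  rw [integral_congr_ae hnode, integral_sub_sq_of_le hab le_rfl hx.1 hx.2]
  field_simp [(sub_pos.2 hab).ne']
  ring

lemma integral_sq_le {C₀ : ℝ} (hab : a < b) (hc : |c| ≤ C₀) (hx : x ∈ Icc a b) :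
    ∫ t, cellKernel c a b x t ^ 2 ≤ C₀ ^ 2 * min (x - a) (b - x) := by
  have hc2 : c ^ 2 ≤ C₀ ^ 2 := sq_le_sq.2 (hc.trans (le_abs_self C₀))
  have hxa : 0 ≤ x - a := sub_nonneg.2 hx.1
  have hbx : 0 ≤ b - x := sub_nonneg.2 hx.2
  rw [integral_sq hab hx, mul_assoc, mul_div_assoc]
  refine mul_le_mul hc2 ?_ (by positivity) (sq_nonneg C₀)
  rw [div_le_iff₀ (sub_pos.2 hab)]
  rcases min_choice (x - a) (b - x) with h | h <;> rw [h] <;> nlinarith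

lemma integral_sub_sq_le {C₀ : ℝ} (hab : a < b) (hc : |c| ≤ C₀) (hx : x ∈ Icc a b)
    (hy : y ∈ Icc a b) :
    ∫ t, (cellKernel c a b x t - cellKernel c a b y t) ^ 2 ≤ C₀ ^ 2 * |x - y| := by
  have hq : 0 ≤ |x - y| / (b - a) := div_nonneg (abs_nonneg _) (sub_pos.2 hab).le
  calc _ = c ^ 2 * |x - y| * (1 - |x - y| / (b - a)) := integral_sub_sq hab hx hy
    _ ≤ c ^ 2 * |x - y| := mul_le_of_le_one_right (by positivity) (by linarith)
    _ ≤ C₀ ^ 2 * |x - y| :=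
      mul_le_mul_of_nonneg_right (sq_le_sq.2 (hc.trans (le_abs_self C₀))) (abs_nonneg _)

end cellKernel

lemma natCeil_div_eq_of_mem_Ioc {h x : ℝ} {j : ℕ} (hh : 0 < h)
    (hx : x ∈ Ioc ((j - 1) * h) (j * h)) : ⌈x / h⌉₊ = j := by
  rcases eq_or_ne j 0 with rfl | hj
  · exact Nat.ceil_eq_zero.2 (div_nonpos_of_nonpos_of_nonneg (by simpa using hx.2) hh.le)
  rw [Nat.ceil_eq_iff hj, Nat.cast_sub (Nat.one_le_iff_ne_zero.2 hj), Nat.cast_one,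
    lt_div_iff₀ hh, div_le_iff₀ hh]
  exact hx

lemma mem_Icc_natCeil_div {h x : ℝ} (hh : 0 < h) (hx : 0 ≤ x) :
    x ∈ Icc ((⌈x / h⌉₊ - 1) * h) (⌈x / h⌉₊ * h) := by
  rw [mem_Icc, ← le_div_iff₀ hh, ← div_le_iff₀ hh]
  exact ⟨by linarith [Nat.ceil_lt_add_one (div_nonneg hx hh.le)], Nat.le_ceil _⟩

-- `meshKernel h c x = L^h₂(x, ·)`: the cell of `x` is `I_j` with `j = ⌈x / h⌉₊`.
noncomputable def meshKernel (h : ℝ) (c : ℕ → ℝ) (x : ℝ) : ℝ → ℝ :=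
  cellKernel (c ⌈x / h⌉₊) ((⌈x / h⌉₊ - 1) * h) (⌈x / h⌉₊ * h) x

namespace meshKernel

variable {h x y : ℝ} {c : ℕ → ℝ}

lemma setIntegral_sub_sq_of_mem_Ioc {u v : ℝ} {j : ℕ} (hh : 0 < h) (hu : u ≤ (j - 1) * h)
    (hv : j * h ≤ v) (hx : x ∈ Ioc ((j - 1) * h) (j * h)) (hy : y ∈ Ioc ((j - 1) * h) (j * h)) :
    ∫ t in Ioo u v, (meshKernel h c x t - meshKernel h c y t) ^ 2 =
      c j ^ 2 * |x - y| * (1 - |x - y| / h) := by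
  simp only [meshKernel, natCeil_div_eq_of_mem_Ioc hh hx, natCeil_div_eq_of_mem_Ioc hh hy]
  rw [cellKernel.setIntegral_sub_sq_eq_integral hu hv hx.2 hy.2,
    cellKernel.integral_sub_sq (by linarith) (Ioc_subset_Icc_self hx) (Ioc_subset_Icc_self hy),
    show (j : ℝ) * h - (j - 1) * h = h by ring]

lemma integral_sub_sq_le {C₀ : ℝ} (hh : 0 < h) (hc : ∀ k, |c k| ≤ C₀) (hx : 0 ≤ x)
    (hy : 0 ≤ y) :
    ∫ t, (meshKernel h c x t - meshKernel h c y t) ^ 2 ≤ 4 * C₀ ^ 2 * |x - y| := by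
  wlog hyx : y ≤ x generalizing x y
  · convert this hy hx (le_of_not_ge hyx) using 1
    · congr 1 with t
      ring
    · rw [abs_sub_comm]
  have hxj := mem_Icc_natCeil_div hh hx
  have hyk := mem_Icc_natCeil_div hh hy
  obtain ⟨j, hj⟩ : ∃ j, ⌈x / h⌉₊ = j := ⟨_, rfl⟩
  obtain ⟨k, hk⟩ : ∃ k, ⌈y / h⌉₊ = k := ⟨_, rfl⟩
  rw [hj] at hxj
  rw [hk] at hyk
  have hkj : k ≤ j := hj ▸ hk ▸ Nat.ceil_mono (div_le_div_of_nonneg_right hyx hh.le)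
  have hcell : ∀ n : ℕ, ((n : ℝ) - 1) * h < n * h := fun n => by linarith
  simp only [meshKernel, hj, hk]
  rcases hkj.eq_or_lt with rfl | hlt
  · exact (cellKernel.integral_sub_sq_le (hcell k) (hc k) hxj hyk).trans
      (by nlinarith [abs_nonneg (x - y), sq_nonneg C₀])
  · -- The node `(j - 1) h` separates `y` from `x`.
    have hnode : (k : ℝ) * h ≤ (j - 1) * h := by
      have : (k : ℝ) + 1 ≤ j := by exact_mod_cast hlt
      gcongr
      linarith
    calc _ ≤ 2 * (∫ t, cellKernel (c j) ((j - 1) * h) (j * h) x t ^ 2) +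
          2 * ∫ t, cellKernel (c k) ((k - 1) * h) (k * h) y t ^ 2 :=
          integral_sub_sq_le_add (cellKernel.memLp _ _ _ _) (cellKernel.memLp _ _ _ _)
      _ ≤ 2 * (C₀ ^ 2 * (x - (j - 1) * h)) + 2 * (C₀ ^ 2 * (k * h - y)) := by
          gcongr
          · exact (cellKernel.integral_sq_le (hcell j) (hc j) hxj).trans
              (by gcongr; exact min_le_left _ _)
          · exact (cellKernel.integral_sq_le (hcell k) (hc k) hyk).trans
              (by gcongr; exact min_le_right _ _)
      _ ≤ 4 * C₀ ^ 2 * |x - y| := by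
          rw [abs_of_nonneg (sub_nonneg.2 hyx)]
          nlinarith [sq_nonneg C₀]

end meshKernel

theorem stmt_18_general (C₀ : ℝ) :
    ∃ C : ℝ, 0 < C ∧
      ∀ (N : ℕ), 0 < N → ∀ h : ℝ, h = 1 / N →
      ∀ (c : ℕ → ℝ), (∀ k, |c k| ≤ C₀) →
      ∀ (L : ℝ → ℝ → ℝ),
        (∀ x t, L x t = c (Nat.ceil (x / h)) *
          ((Set.Icc (((Nat.ceil (x / h) : ℝ) - 1) * h) x).indicator
              (fun _ => (1:ℝ)) t -
            (x - ((Nat.ceil (x / h) : ℝ) - 1) * h) / h *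
              (Set.Ioc (((Nat.ceil (x / h) : ℝ) - 1) * h)
                ((Nat.ceil (x / h) : ℝ) * h)).indicator (fun _ => (1:ℝ)) t)) →
      ((∀ j ∈ Finset.Icc 1 N, ∀ x ∈ Set.Ioc (((j:ℝ) - 1) * h) ((j:ℝ) * h),
          ∀ y ∈ Set.Ioc (((j:ℝ) - 1) * h) ((j:ℝ) * h),
          (∫ t in Set.Ioo (0:ℝ) 1, (L x t - L y t) ^ 2) =
            (c j) ^ 2 * |x - y| * (1 - |x - y| / h)) ∧
        (∀ x ∈ Set.Icc (0:ℝ) 1, ∀ y ∈ Set.Icc (0:ℝ) 1,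
          (∫ t in Set.Ioo (0:ℝ) 1, (L x t - L y t) ^ 2) ≤ C * |x - y|)) := by
  refine ⟨4 * C₀ ^ 2 + 1, by positivity, fun N hN h hNh c hc L hL => ?_⟩
  have hh : 0 < h := by rw [hNh]; positivity
  have hLM : L = meshKernel h c := by
    funext x t
    rw [hL, meshKernel, cellKernel, show (⌈x / h⌉₊ : ℝ) * h - (⌈x / h⌉₊ - 1) * h = h by ring]
  subst hLM
  refine ⟨fun j hj x hx y hy => ?_, fun x hx y hy => ?_⟩
  · obtain ⟨hj1, hjN⟩ := Finset.mem_Icc.1 hj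
    have hj1' : (1 : ℝ) ≤ j := by exact_mod_cast hj1
    have hjN' : (j : ℝ) ≤ N := by exact_mod_cast hjN
    refine meshKernel.setIntegral_sub_sq_of_mem_Ioc hh (by nlinarith) ?_ hx hy
    calc (j : ℝ) * h ≤ N * h := by gcongr
      _ = 1 := by rw [hNh]; field_simp
  · calc ∫ t in Ioo 0 1, (meshKernel h c x t - meshKernel h c y t) ^ 2
        ≤ ∫ t, (meshKernel h c x t - meshKernel h c y t) ^ 2 :=
          setIntegral_le_integral
            ((cellKernel.memLp _ _ _ _).sub (cellKernel.memLp _ _ _ _)).integrable_sq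
            (Filter.Eventually.of_forall fun t => sq_nonneg _)
      _ ≤ 4 * C₀ ^ 2 * |x - y| := meshKernel.integral_sub_sq_le hh hc hx.1 hy.1
      _ ≤ (4 * C₀ ^ 2 + 1) * |x - y| := by nlinarith [abs_nonneg (x - y)]

/-- L²-in-`t` modulus of continuity for the kernel
`L^h₂(x,t) = c_{j(x)}(1_{[x_{j(x)-1},x]}(t) - ((x - x_{j(x)-1})/h) 1_{I_{j(x)}}(t))`
with `j(x) = ⌈x/h⌉` and `|c_j| ≤ C₀`: for `x,y` in the same mesh interval the
exact identity `∫₀¹ (L^h₂(x,·) - L^h₂(y,·))² = c_j² |x-y|(1 - |x-y|/h)` holds,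
and for arbitrary `x,y ∈ [0,1]`, `∫₀¹ (L^h₂(x,·) - L^h₂(y,·))² ≤ C |x-y|` with
`C` depending only on `C₀`. -/
theorem stmt_18 (C₀ : ℝ) (hC₀ : 0 ≤ C₀) :
    ∃ C : ℝ, 0 < C ∧
      ∀ (N : ℕ), 0 < N → ∀ h : ℝ, h = 1 / N →
      ∀ (c : ℕ → ℝ), (∀ k, |c k| ≤ C₀) →
      ∀ (L : ℝ → ℝ → ℝ),
        (∀ x t, L x t = c (Nat.ceil (x / h)) *
          ((Set.Icc (((Nat.ceil (x / h) : ℝ) - 1) * h) x).indicator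
              (fun _ => (1:ℝ)) t -
            (x - ((Nat.ceil (x / h) : ℝ) - 1) * h) / h *
              (Set.Ioc (((Nat.ceil (x / h) : ℝ) - 1) * h)
                ((Nat.ceil (x / h) : ℝ) * h)).indicator (fun _ => (1:ℝ)) t)) →
      ((∀ j ∈ Finset.Icc 1 N, ∀ x ∈ Set.Ioc (((j:ℝ) - 1) * h) ((j:ℝ) * h),
          ∀ y ∈ Set.Ioc (((j:ℝ) - 1) * h) ((j:ℝ) * h),
          (∫ t in Set.Ioo (0:ℝ) 1, (L x t - L y t) ^ 2) =
            (c j) ^ 2 * |x - y| * (1 - |x - y| / h)) ∧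
        (∀ x ∈ Set.Icc (0:ℝ) 1, ∀ y ∈ Set.Icc (0:ℝ) 1,
          (∫ t in Set.Ioo (0:ℝ) 1, (L x t - L y t) ^ 2) ≤ C * |x - y|)) :=
  stmt_18_general C₀
end
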